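/- arXiv:1106.5591 — 2 statements merged into one kernel-verified Lean document; each statement's English description precedes it below -/
import Mathlib

section
/- If G is a graph of order n with minimum degree at least k, then the k-tuple total restrained domatic number d^r_{×k,t}(G) is at most n/(k+1). -/
open SimpleGraph

/-- `S` is a `k`-tuple total restrained dominating set of `G`: every vertex has at
least `k` neighbors in `S`, and every vertex outside `S` has at least `k` neighbors
outside `S`. -/
def IsKTRDS {V : Type*} (G : SimpleGraph V) (k : ℕ) (S : Set V) : Prop :=
  (∀ v : V, k ≤ (S ∩ G.neighborSet v).ncard) ∧
  (∀ v : V, v ∉ S → k ≤ (Sᶜ ∩ G.neighborSet v).ncard)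

/-- `S` is a `k`-tuple total dominating set of `G`. -/
def IsKTDS {V : Type*} (G : SimpleGraph V) (k : ℕ) (S : Set V) : Prop :=
  ∀ v : V, k ≤ (S ∩ G.neighborSet v).ncard

/-- The `k`-tuple total restrained domination number of `G`. -/
noncomputable def ktrdNum {V : Type*} (G : SimpleGraph V) (k : ℕ) : ℕ :=
  sInf {m | ∃ S : Set V, IsKTRDS G k S ∧ S.ncard = m}

/-- The `k`-tuple total domination number of `G`. -/
noncomputable def ktNum {V : Type*} (G : SimpleGraph V) (k : ℕ) : ℕ :=
  sInf {m | ∃ S : Set V, IsKTDS G k S ∧ S.ncard = m}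

/-- The `k`-tuple total restrained domatic number of `G`. -/
noncomputable def ktrdDomatic {V : Type*} (G : SimpleGraph V) (k : ℕ) : ℕ :=
  sSup {d | ∃ f : Fin d → Set V, (∀ i, IsKTRDS G k (f i)) ∧ ∀ v : V, ∃! i, v ∈ f i}

/-- The `k`-tuple total domatic number of `G`. -/
noncomputable def ktDomatic {V : Type*} (G : SimpleGraph V) (k : ℕ) : ℕ :=
  sSup {d | ∃ f : Fin d → Set V, (∀ i, IsKTDS G k (f i)) ∧ ∀ v : V, ∃! i, v ∈ f i}

/-!
A vertex `u` of a `k`-tuple total dominating set `S` has `k` neighbours in `S`, so together with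
`u` itself `S` has at least `k + 1` elements; as soon as `k ≥ 1` and the graph has a vertex, `S`
does contain such a `u`. A partition of the `n` vertices into `d` such sets thus gives
`d (k + 1) ≤ n`. On the empty graph every `d` is the size of a partition, so the domatic number
is the junk value `sSup ℕ = 0`.
-/

section

variable {V : Type*} {G : SimpleGraph V} {k : ℕ} {S : Set V}

theorem IsKTRDS.isKTDS (hS : IsKTRDS G k S) : IsKTDS G k S := hS.1

theorem IsKTDS.succ_le_ncard [Finite V] [Nonempty V] (hk : 1 ≤ k) (hS : IsKTDS G k S) :
    k + 1 ≤ S.ncard := by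
  obtain ⟨u, huS, -⟩ : (S ∩ G.neighborSet (Classical.arbitrary V)).Nonempty := by
    rw [← Set.ncard_pos]
    exact hS _ |>.trans_lt' hk
  have hu : u ∉ S ∩ G.neighborSet u := fun h => G.loopless.irrefl u h.2
  calc k + 1 ≤ (S ∩ G.neighborSet u).ncard + 1 := Nat.succ_le_succ (hS u)
    _ = (insert u (S ∩ G.neighborSet u)).ncard := (Set.ncard_insert_of_notMem hu).symm
    _ ≤ S.ncard := Set.ncard_le_ncard (Set.insert_subset huS Set.inter_subset_left)

theorem mul_le_card_of_forall_existsUnique_mem {ι : Type*} [Fintype ι] [Fintype V] {m : ℕ}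
    (f : ι → Set V) (hpart : ∀ v, ∃! i, v ∈ f i) (hm : ∀ i, m ≤ (f i).ncard) :
    Fintype.card ι * m ≤ Fintype.card V := by
  classical
  choose g hg hg_unique using hpart
  have hfiber : ∀ i, (f i).ncard = (Finset.univ.filter fun v => g v = i).card := fun i => by
    rw [← Set.ncard_coe_finset]
    congr 1
    ext v
    simpa using ⟨fun hv => (hg_unique v i hv).symm, fun h => h ▸ hg v⟩
  calc Fintype.card ι * m = ∑ _i : ι, m := by simp [mul_comm]
    _ ≤ ∑ i, (f i).ncard := Finset.sum_le_sum fun i _ => hm i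
    _ = Fintype.card V := by
      simp only [hfiber]
      exact (Finset.card_eq_sum_card_fiberwise fun _ _ => by simp).symm

theorem ktrdDomatic_eq_zero_of_isEmpty [IsEmpty V] : ktrdDomatic G k = 0 := by
  have hunbounded : ¬BddAbove {d | ∃ f : Fin d → Set V,
      (∀ i, IsKTRDS G k (f i)) ∧ ∀ v : V, ∃! i, v ∈ f i} := by
    refine fun hbdd => not_bddAbove_univ (hbdd.mono fun d _ => ?_)
    exact ⟨fun _ => ∅, fun _ => ⟨isEmptyElim, isEmptyElim⟩, isEmptyElim⟩
  rw [ktrdDomatic, csSup_of_not_bddAbove hunbounded, csSup_empty]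
  rfl

theorem ktrdDomatic_mul_succ_le_card [Fintype V] (hk : 1 ≤ k) :
    ktrdDomatic G k * (k + 1) ≤ Fintype.card V := by
  cases isEmpty_or_nonempty V
  · simp [ktrdDomatic_eq_zero_of_isEmpty]
  suffices ktrdDomatic G k ≤ Fintype.card V / (k + 1) from
    (Nat.mul_le_mul_right _ this).trans (Nat.div_mul_le_self _ _)
  refine csSup_le' fun d ⟨f, hf, hpart⟩ => (Nat.le_div_iff_mul_le k.succ_pos).2 ?_
  simpa using mul_le_card_of_forall_existsUnique_mem f hpart
    fun i => (hf i).isKTDS.succ_le_ncard hk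

end

theorem stmt_16_general {V : Type*} [Fintype V] (G : SimpleGraph V) (k : ℕ) (hk : 1 ≤ k) :
    (ktrdDomatic G k : ℝ) ≤ (Fintype.card V : ℝ) / (k + 1) := by
  rw [le_div_iff₀ (by positivity)]
  exact_mod_cast ktrdDomatic_mul_succ_le_card hk

theorem stmt_16 {V : Type*} [Fintype V] (G : SimpleGraph V) (k : ℕ) (hk : 1 ≤ k)
    (hδ : ∀ v : V, k ≤ (G.neighborSet v).ncard) :
    (ktrdDomatic G k : ℝ) ≤ (Fintype.card V : ℝ) / (k + 1) :=
  stmt_16_general G k hk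
end

section
/- If G is a graph of order n with k ≤ min(δ(G), δ(Ḡ)) where Ḡ is the complement of G, then γ^r_{×(k−1),t}(G) + γ^r_{×(k−1),t}(Ḡ) ≤ γ^r_{×k,t}(GḠ) ≤ γ^r_{×k,t}(G) + γ^r_{×k,t}(Ḡ), where the lower bound requires k ≥ 2 and the upper bound requires k ≥ 1. -/
open SimpleGraph

/-- The complementary prism of `G`: disjoint union of `G` and its complement,
joined by a perfect matching between corresponding vertices. -/
def compPrism {V : Type*} (G : SimpleGraph V) : SimpleGraph (V ⊕ V) where
  Adj x y :=
    match x, y with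
    | Sum.inl u, Sum.inl v => G.Adj u v
    | Sum.inr u, Sum.inr v => Gᶜ.Adj u v
    | Sum.inl u, Sum.inr v => u = v
    | Sum.inr u, Sum.inl v => u = v
  symm := by
    constructor
    rintro (u | u) (v | v) h
    · exact G.adj_symm h
    · exact h.symm
    · exact h.symm
    · exact Gᶜ.adj_symm h
  loopless := by
    constructor
    rintro (u | u) h
    · exact G.irrefl h
    · exact Gᶜ.irrefl h

/-!
Every vertex of `compPrism G` has exactly one neighbour outside its own copy of `G` or `Gᶜ`,
namely its partner across the matching. Hence a `k`-tuple total restrained dominating set of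
`compPrism G` restricts on each side to a `(k - 1)`-tuple one, and conversely the union of
`k`-tuple total restrained dominating sets of `G` and `Gᶜ` is one of `compPrism G`. The degree
hypotheses make the whole vertex set such a set, so all the minima involved are attained.
-/

namespace Set

theorem ncard_image_inl_union_image_inr {α β : Type*} {s : Set α} {t : Set β}
    (hs : s.Finite) (ht : t.Finite) :
    (Sum.inl '' s ∪ Sum.inr '' t : Set (α ⊕ β)).ncard = s.ncard + t.ncard := by
  rw [ncard_union_eq disjoint_image_inl_image_inr (hs.image _) (ht.image _),
    ncard_image_of_injective _ Sum.inl_injective, ncard_image_of_injective _ Sum.inr_injective]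

theorem ncard_eq_ncard_preimage_inl_add_ncard_preimage_inr {α β : Type*} {s : Set (α ⊕ β)}
    (hs : s.Finite) : s.ncard = (Sum.inl ⁻¹' s).ncard + (Sum.inr ⁻¹' s).ncard := by
  conv_lhs => rw [← image_preimage_inl_union_image_preimage_inr s]
  exact ncard_image_inl_union_image_inr (hs.preimage Sum.inl_injective.injOn)
    (hs.preimage Sum.inr_injective.injOn)

theorem ncard_inter_singleton_le_one {α : Type*} (s : Set α) (a : α) : (s ∩ {a}).ncard ≤ 1 :=
  (ncard_le_ncard inter_subset_right).trans (ncard_singleton a).le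

end Set

section KTRDS

variable {W : Type*} {H : SimpleGraph W} {k : ℕ} {S : Set W}

theorem isKTRDS_univ (h : ∀ v, k ≤ (H.neighborSet v).ncard) : IsKTRDS H k Set.univ :=
  ⟨fun v => by simpa using h v, fun v hv => absurd (Set.mem_univ v) hv⟩

theorem ktrdNum_le_ncard (hS : IsKTRDS H k S) : ktrdNum H k ≤ S.ncard :=
  Nat.sInf_le ⟨S, hS, rfl⟩

theorem exists_isKTRDS_ncard_eq_ktrdNum (h : ∃ S, IsKTRDS H k S) :
    ∃ S, IsKTRDS H k S ∧ S.ncard = ktrdNum H k :=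
  let ⟨S, hS⟩ := h
  Nat.sInf_mem (s := {m | ∃ S, IsKTRDS H k S ∧ S.ncard = m}) ⟨S.ncard, S, hS, rfl⟩

end KTRDS

namespace compPrism

variable {V : Type*} (G : SimpleGraph V) (v : V)

theorem preimage_inl_neighborSet_inl :
    Sum.inl ⁻¹' (compPrism G).neighborSet (Sum.inl v) = G.neighborSet v := rfl

theorem preimage_inr_neighborSet_inl :
    Sum.inr ⁻¹' (compPrism G).neighborSet (Sum.inl v) = {v} :=
  Set.ext fun _ => eq_comm

theorem preimage_inr_neighborSet_inr :
    Sum.inr ⁻¹' (compPrism G).neighborSet (Sum.inr v) = Gᶜ.neighborSet v := rfl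

theorem preimage_inl_neighborSet_inr :
    Sum.inl ⁻¹' (compPrism G).neighborSet (Sum.inr v) = {v} :=
  Set.ext fun _ => eq_comm

variable [Finite V]

theorem ncard_inter_neighborSet_inl (T : Set (V ⊕ V)) :
    (T ∩ (compPrism G).neighborSet (Sum.inl v)).ncard =
      (Sum.inl ⁻¹' T ∩ G.neighborSet v).ncard + (Sum.inr ⁻¹' T ∩ {v}).ncard := by
  rw [Set.ncard_eq_ncard_preimage_inl_add_ncard_preimage_inr (Set.toFinite _),
    Set.preimage_inter, Set.preimage_inter, preimage_inl_neighborSet_inl,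
    preimage_inr_neighborSet_inl]

theorem ncard_inter_neighborSet_inr (T : Set (V ⊕ V)) :
    (T ∩ (compPrism G).neighborSet (Sum.inr v)).ncard =
      (Sum.inr ⁻¹' T ∩ Gᶜ.neighborSet v).ncard + (Sum.inl ⁻¹' T ∩ {v}).ncard := by
  rw [Set.ncard_eq_ncard_preimage_inl_add_ncard_preimage_inr (Set.toFinite _),
    Set.preimage_inter, Set.preimage_inter, preimage_inl_neighborSet_inr,
    preimage_inr_neighborSet_inr, add_comm]

theorem ncard_neighborSet_inl :
    ((compPrism G).neighborSet (Sum.inl v)).ncard = (G.neighborSet v).ncard + 1 := by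
  simpa using ncard_inter_neighborSet_inl G v Set.univ

theorem ncard_neighborSet_inr :
    ((compPrism G).neighborSet (Sum.inr v)).ncard = (Gᶜ.neighborSet v).ncard + 1 := by
  simpa using ncard_inter_neighborSet_inr G v Set.univ

end compPrism

namespace IsKTRDS

variable {V : Type*} [Finite V] {G : SimpleGraph V} {k : ℕ} {S : Set (V ⊕ V)}

theorem preimage_inl (hS : IsKTRDS (compPrism G) k S) : IsKTRDS G (k - 1) (Sum.inl ⁻¹' S) := by
  refine ⟨fun v => ?_, fun v hv => ?_⟩
  · have h := hS.1 (Sum.inl v)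
    rw [compPrism.ncard_inter_neighborSet_inl] at h
    have := Set.ncard_inter_singleton_le_one (Sum.inr ⁻¹' S) v
    omega
  · have h := hS.2 (Sum.inl v) hv
    rw [compPrism.ncard_inter_neighborSet_inl, Set.preimage_compl] at h
    have := Set.ncard_inter_singleton_le_one (Sum.inr ⁻¹' Sᶜ) v
    omega

theorem preimage_inr (hS : IsKTRDS (compPrism G) k S) : IsKTRDS Gᶜ (k - 1) (Sum.inr ⁻¹' S) := by
  refine ⟨fun v => ?_, fun v hv => ?_⟩
  · have h := hS.1 (Sum.inr v)
    rw [compPrism.ncard_inter_neighborSet_inr] at h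
    have := Set.ncard_inter_singleton_le_one (Sum.inl ⁻¹' S) v
    omega
  · have h := hS.2 (Sum.inr v) hv
    rw [compPrism.ncard_inter_neighborSet_inr, Set.preimage_compl] at h
    have := Set.ncard_inter_singleton_le_one (Sum.inl ⁻¹' Sᶜ) v
    omega

theorem compPrism_of_preimage (hl : IsKTRDS G k (Sum.inl ⁻¹' S))
    (hr : IsKTRDS Gᶜ k (Sum.inr ⁻¹' S)) : IsKTRDS (compPrism G) k S := by
  refine ⟨?_, ?_⟩
  · rintro (v | v)
    · rw [compPrism.ncard_inter_neighborSet_inl]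
      exact (hl.1 v).trans le_self_add
    · rw [compPrism.ncard_inter_neighborSet_inr]
      exact (hr.1 v).trans le_self_add
  · rintro (v | v) hv
    · rw [compPrism.ncard_inter_neighborSet_inl, Set.preimage_compl]
      exact (hl.2 v hv).trans le_self_add
    · rw [compPrism.ncard_inter_neighborSet_inr, Set.preimage_compl]
      exact (hr.2 v hv).trans le_self_add

end IsKTRDS

theorem stmt_19 {V : Type*} [Fintype V] (G : SimpleGraph V) (k : ℕ)
    (hδG : ∀ v : V, k ≤ (G.neighborSet v).ncard)
    (hδG' : ∀ v : V, k ≤ (Gᶜ.neighborSet v).ncard) :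
    (2 ≤ k → ktrdNum G (k - 1) + ktrdNum Gᶜ (k - 1) ≤ ktrdNum (compPrism G) k) ∧
    (1 ≤ k → ktrdNum (compPrism G) k ≤ ktrdNum G k + ktrdNum Gᶜ k) := by
  refine ⟨fun _ => ?_, fun _ => ?_⟩
  · have hδ : ∀ x, k ≤ ((compPrism G).neighborSet x).ncard := by
      rintro (v | v)
      · rw [compPrism.ncard_neighborSet_inl]; exact (hδG v).trans le_self_add
      · rw [compPrism.ncard_neighborSet_inr]; exact (hδG' v).trans le_self_add
    obtain ⟨S, hS, hScard⟩ := exists_isKTRDS_ncard_eq_ktrdNum ⟨_, isKTRDS_univ hδ⟩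
    calc ktrdNum G (k - 1) + ktrdNum Gᶜ (k - 1)
        ≤ (Sum.inl ⁻¹' S).ncard + (Sum.inr ⁻¹' S).ncard :=
          add_le_add (ktrdNum_le_ncard hS.preimage_inl) (ktrdNum_le_ncard hS.preimage_inr)
      _ = ktrdNum (compPrism G) k := by
          rw [← hScard, Set.ncard_eq_ncard_preimage_inl_add_ncard_preimage_inr (Set.toFinite S)]
  · obtain ⟨A, hA, hAcard⟩ := exists_isKTRDS_ncard_eq_ktrdNum ⟨_, isKTRDS_univ hδG⟩
    obtain ⟨B, hB, hBcard⟩ := exists_isKTRDS_ncard_eq_ktrdNum ⟨_, isKTRDS_univ hδG'⟩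
    have hS : IsKTRDS (compPrism G) k (Sum.inl '' A ∪ Sum.inr '' B) :=
      IsKTRDS.compPrism_of_preimage (by simpa [Set.preimage_image_eq _ Sum.inl_injective])
        (by simpa [Set.preimage_image_eq _ Sum.inr_injective])
    calc ktrdNum (compPrism G) k ≤ (Sum.inl '' A ∪ Sum.inr '' B).ncard := ktrdNum_le_ncard hS
      _ = ktrdNum G k + ktrdNum Gᶜ k := by
          rw [Set.ncard_image_inl_union_image_inr (Set.toFinite A) (Set.toFinite B), hAcard, hBcard]
end
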